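/- arXiv:1710.01620 — 3 statements merged into one kernel-verified Lean document; each statement's English description precedes it below -/
import Mathlib

section
/- Let P be a convex polygon, e an edge of P, and p a point strictly on the outer side of the line supporting e but with p ∉ P. If the segment from p to its closest point on e meets the interior of P, then this segment crosses another edge e' of P, and the Euclidean distance from p to e' is strictly smaller than the Euclidean distance from p to e. -/
/-!
The segment from a point `m ∈ [p, q] ∩ int P` to the exterior point `p` leaves `P` through a
boundary point `x` strictly between `m` and `p`, so `dist p x < dist p m ≤ dist p q`, and
`dist p q` is the distance from `p` to `e`. It remains to see that `x` lies on an edge. Take a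
supporting line `x + ℝ w` of `P` at `x`. If `x` is not a vertex, writing `x` as a convex
combination of the vertices shows that the line carries vertices strictly on both sides of `x`.
Walking around the polygon from a vertex ahead of `x` on the line to one behind it, consider the
first edge `[v j, v (j + 1)]` whose endpoint `v (j + 1)` is not ahead of `x` on the line. Since
the vertex behind `x` lies to the left of this edge, `v (j + 1)` cannot leave the supporting
line, so the edge contains `x`.
-/

open Metric

noncomputable section

abbrev Pt := EuclideanSpace ℝ (Fin 2)

/-- 2D orientation determinant. -/
def det2 (x y : Pt) : ℝ := x 0 * y 1 - x 1 * y 0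

@[simp] lemma det2_add_right (w y z : Pt) : det2 w (y + z) = det2 w y + det2 w z := by
  simp only [det2, PiLp.add_apply]; ring

@[simp] lemma det2_sub_right (w y z : Pt) : det2 w (y - z) = det2 w y - det2 w z := by
  simp only [det2, PiLp.sub_apply]; ring

@[simp] lemma det2_smul_right (w : Pt) (c : ℝ) (y : Pt) : det2 w (c • y) = c * det2 w y := by
  simp only [det2, PiLp.smul_apply, smul_eq_mul]; ring

@[simp] lemma det2_self (w : Pt) : det2 w w = 0 := by
  simp only [det2]; ring

def det2L (w : Pt) : Pt →ₗ[ℝ] ℝ where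
  toFun := det2 w
  map_add' := det2_add_right w
  map_smul' := det2_smul_right w

lemma det2_anticomm (w y : Pt) : det2 w y = -det2 y w := by
  simp only [det2]; ring

lemma exists_forall_apply_eq_det2 (f : StrongDual ℝ Pt) : ∃ w, ∀ y, f y = det2 w y := by
  refine ⟨!₂[f (EuclideanSpace.single 1 1), -f (EuclideanSpace.single 0 1)], fun y => ?_⟩
  have hy : y = y 0 • EuclideanSpace.single 0 1 + y 1 • EuclideanSpace.single 1 1 := by
    ext i; fin_cases i <;> simp
  conv_lhs => rw [hy]
  simp only [map_add, map_smul, smul_eq_mul, det2, Matrix.cons_val_zero, Matrix.cons_val_one,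
    Matrix.cons_val_fin_one]
  ring

lemma exists_smul_of_det2_eq_zero {w z : Pt} (hw : w ≠ 0) (hz : det2 w z = 0) :
    ∃ c : ℝ, z = c • w := by
  have hw' : w 0 ≠ 0 ∨ w 1 ≠ 0 := by
    by_contra! h
    exact hw (by ext i; fin_cases i <;> simp [h.1, h.2])
  simp only [det2] at hz
  rcases hw' with h | h
  · refine ⟨z 0 / w 0, ?_⟩
    ext i; fin_cases i
    · simp [h]
    · simp only [Fin.mk_one, PiLp.smul_apply, smul_eq_mul]
      field_simp
      linarith
  · refine ⟨z 1 / w 1, ?_⟩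
    ext i; fin_cases i
    · simp only [Fin.zero_eta, PiLp.smul_apply, smul_eq_mul]
      field_simp
      linarith
    · simp [h]

open Fin.NatCast in
lemma Fin.exists_and_not_add_one {n : ℕ} [NeZero n] {Q : Fin n → Prop} {a b : Fin n}
    (ha : Q a) (hb : ¬ Q b) : ∃ j, Q j ∧ ¬ Q (j + 1) := by
  by_contra! h
  have hk : ∀ k : ℕ, Q (a + k) := by
    intro k
    induction k with
    | zero => simpa using ha
    | succ k ih => simpa [add_assoc] using h _ ih
  exact hb (by simpa using hk (b - a).val)

lemma mem_segment_of_sub_eq_smul {a b x w : Pt} {s t : ℝ} (ha : a - x = s • w) (hs : 0 ≤ s)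
    (hb : b - x = t • w) (ht : t ≤ 0) : x ∈ segment ℝ a b := by
  rw [mem_segment_iff_sameRay, ← neg_sub, ha, hb, ← neg_smul]
  exact sameRay_smul_smul_of_mul_nonneg (mul_nonneg_of_nonpos_of_nonpos (by linarith) ht)

lemma IsPreconnected.inter_frontier_nonempty {X : Type*} [TopologicalSpace X] {s t : Set X}
    (hs : IsPreconnected s) (hst : (s ∩ t).Nonempty) (hst' : (s \ t).Nonempty) :
    (s ∩ frontier t).Nonempty := by
  by_contra h
  have hcover : s ⊆ interior t ∪ (closure t)ᶜ := fun y hy => by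
    by_cases hyi : y ∈ interior t
    · exact Or.inl hyi
    · exact Or.inr fun hyc => h ⟨y, hy, hyc, hyi⟩
  have hdisj : Disjoint (interior t) (closure t)ᶜ :=
    disjoint_compl_right.mono_left interior_subset_closure
  rcases hs.subset_or_subset isOpen_interior isClosed_closure.isOpen_compl hdisj hcover with
    h | h
  · obtain ⟨y, hys, hyt⟩ := hst'
    exact hyt (interior_subset (h hys))
  · obtain ⟨y, hys, hyt⟩ := hst
    exact h hys (subset_closure hyt)

lemma exists_det2_sub_nonpos {P : Set Pt} (hP : Convex ℝ P) (hint : (interior P).Nonempty)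
    {x : Pt} (hxi : x ∉ interior P) :
    ∃ w ≠ 0, ∀ y ∈ P, det2 w (y - x) ≤ 0 := by
  obtain ⟨f, u, hf, hfP, hfx⟩ := geometric_hahn_banach_of_nonempty_interior hP
    (convex_singleton x) (Set.disjoint_singleton_right.2 hxi) hint (Set.singleton_nonempty x)
  obtain ⟨w, hw⟩ := exists_forall_apply_eq_det2 f
  refine ⟨w, ?_, fun y hy => ?_⟩
  · rintro rfl
    exact hf (ContinuousLinearMap.ext fun y => by simp [hw, det2])
  · rw [det2_sub_right, ← hw, ← hw]
    linarith [hfP y hy, hfx x rfl]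

lemma eq_zero_of_sum_mul_eq_zero {ι : Type*} {s : Finset ι} {l c : ι → ℝ}
    (hl : ∀ j ∈ s, 0 ≤ l j) (hsum : ∑ j ∈ s, l j * c j = 0)
    (hc : ∀ j ∈ s, 0 < l j → c j ≤ 0) : ∀ j ∈ s, 0 < l j → c j = 0 := by
  have hterm : ∀ j ∈ s, l j * c j ≤ 0 := fun j hj => by
    rcases (hl j hj).eq_or_lt with h | h
    · simp [← h]
    · exact mul_nonpos_of_nonneg_of_nonpos h.le (hc j hj h)
  intro j hj hlj
  have := (Finset.sum_eq_zero_iff_of_nonpos hterm).1 hsum j hj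
  exact (mul_eq_zero.1 this).resolve_left hlj.ne'

lemma exists_pos_of_sum_mul_eq_zero {ι : Type*} {s : Finset ι} {l c : ι → ℝ}
    (hl : ∀ j ∈ s, 0 ≤ l j) (hsum : ∑ j ∈ s, l j * c j = 0) {j₀ : ι} (hj₀ : j₀ ∈ s)
    (hlj₀ : 0 < l j₀) (hc : ∀ j ∈ s, 0 < l j → c j ≠ 0) : ∃ j ∈ s, 0 < l j ∧ 0 < c j := by
  by_contra! h
  exact hc j₀ hj₀ hlj₀ (eq_zero_of_sum_mul_eq_zero hl hsum h j₀ hj₀ hlj₀)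

lemma exists_vertex_sub_eq_pos_smul_and_neg_smul {ι : Type*} {v : ι → Pt} {x w : Pt}
    (hw : w ≠ 0) (hx : x ∈ convexHull ℝ (Set.range v)) (hxv : ∀ j, v j ≠ x)
    (hsupp : ∀ j, det2 w (v j - x) ≤ 0) :
    (∃ j, ∃ t : ℝ, 0 < t ∧ v j - x = t • w) ∧ (∃ j, ∃ t : ℝ, t < 0 ∧ v j - x = t • w) := by
  rw [convexHull_range_eq_exists_affineCombination] at hx
  obtain ⟨s, l, hl, hl1, hlx⟩ := hx
  rw [Finset.affineCombination_eq_linear_combination _ _ _ hl1] at hlx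
  have hsum (f : Pt →ₗ[ℝ] ℝ) : ∑ j ∈ s, l j * f (v j - x) = 0 := by
    have h0 : ∑ j ∈ s, l j • (v j - x) = 0 := by
      simp only [smul_sub, Finset.sum_sub_distrib, ← Finset.sum_smul, hl1, one_smul, hlx,
        sub_self]
    simpa [map_sum] using congrArg f h0
  have hface : ∀ j ∈ s, 0 < l j → ∃ t : ℝ, t ≠ 0 ∧ v j - x = t • w := by
    intro j hj hlj
    obtain ⟨t, ht⟩ := exists_smul_of_det2_eq_zero hw <|
      eq_zero_of_sum_mul_eq_zero hl (hsum (det2L w))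
        (fun k _ _ => hsupp k) j hj hlj
    exact ⟨t, fun h => hxv j (by simpa [h, sub_eq_zero] using ht), ht⟩
  obtain ⟨j₀, hj₀, hlj₀⟩ : ∃ j ∈ s, 0 < l j := by
    obtain ⟨j, hj, hlj⟩ := Finset.exists_ne_zero_of_sum_ne_zero (hl1 ▸ one_ne_zero)
    exact ⟨j, hj, (hl j hj).lt_of_ne' hlj⟩
  have hw2 : 0 < ‖w‖ ^ 2 := by positivity
  have hinner (t : ℝ) : innerₛₗ ℝ w (t • w) = t * ‖w‖ ^ 2 := by
    rw [innerₛₗ_apply_apply, real_inner_smul_right, real_inner_self_eq_norm_sq]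
  have hne : ∀ j ∈ s, 0 < l j → innerₛₗ ℝ w (v j - x) ≠ 0 := fun j hj hlj => by
    obtain ⟨t, ht0, ht⟩ := hface j hj hlj
    rw [ht, hinner]
    positivity
  constructor
  · obtain ⟨j, hj, hlj, hc⟩ :=
      exists_pos_of_sum_mul_eq_zero hl (hsum (innerₛₗ ℝ w)) hj₀ hlj₀ hne
    obtain ⟨t, -, ht⟩ := hface j hj hlj
    rw [ht, hinner] at hc
    exact ⟨j, t, pos_of_mul_pos_left hc hw2.le, ht⟩
  · obtain ⟨j, hj, hlj, hc⟩ :=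
      exists_pos_of_sum_mul_eq_zero hl (hsum (-innerₛₗ ℝ w)) hj₀ hlj₀ (by simpa using hne)
    obtain ⟨t, -, ht⟩ := hface j hj hlj
    rw [LinearMap.neg_apply, ht, hinner] at hc
    exact ⟨j, t, by nlinarith, ht⟩

lemma mem_segment_of_det2_nonneg {a b c x w : Pt} {s t : ℝ} (hw : w ≠ 0)
    (hc : 0 ≤ det2 (b - a) (c - a)) (hb : det2 w (b - x) ≤ 0)
    (ha : a - x = s • w) (hs : 0 < s) (hcx : c - x = t • w) (ht : t < 0)
    (hb' : ¬ ∃ r : ℝ, 0 < r ∧ b - x = r • w) : x ∈ segment ℝ a b := by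
  have hca : c - a = (t - s) • w := by
    rw [sub_smul, ← ha, ← hcx]; abel
  have hturn : 0 ≤ det2 w (b - a) := by
    rw [hca, det2_smul_right, det2_anticomm] at hc
    nlinarith
  have hline : det2 w (b - x) = 0 := by
    have : b - x = (b - a) + (a - x) := by abel
    rw [this, det2_add_right, ha, det2_smul_right, det2_self] at hb ⊢
    linarith
  obtain ⟨r, hr⟩ := exists_smul_of_det2_eq_zero hw hline
  exact mem_segment_of_sub_eq_smul ha hs.le hr (not_lt.1 fun h => hb' ⟨r, h, hr⟩)

theorem exists_mem_edge_of_mem_frontier {n : ℕ} [NeZero n] {v : Fin n → Pt}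
    (hccw : ∀ i j : Fin n, 0 ≤ det2 (v (i + 1) - v i) (v j - v i))
    (hint : (interior (convexHull ℝ (Set.range v))).Nonempty)
    {x : Pt} (hx : x ∈ frontier (convexHull ℝ (Set.range v))) :
    ∃ j, x ∈ segment ℝ (v j) (v (j + 1)) := by
  rw [((Set.finite_range v).isClosed_convexHull (𝕜 := ℝ)).frontier_eq] at hx
  obtain ⟨w, hw, hsupp⟩ := exists_det2_sub_nonpos (convex_convexHull ℝ _) hint hx.2
  have hsupp' (j : Fin n) : det2 w (v j - x) ≤ 0 := hsupp _ (subset_convexHull ℝ _ ⟨j, rfl⟩)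
  by_contra! hx_edge
  have hxv (j : Fin n) : v j ≠ x := fun h => hx_edge j (h ▸ left_mem_segment ℝ _ _)
  obtain ⟨⟨j₁, hj₁⟩, ⟨j₂, t, ht, hj₂⟩⟩ :=
    exists_vertex_sub_eq_pos_smul_and_neg_smul hw hx.1 hxv hsupp'
  have hj₂' : ¬ ∃ r : ℝ, 0 < r ∧ v j₂ - x = r • w := fun ⟨r, hr, hr'⟩ => by
    have : t = r := smul_left_injective ℝ hw (hj₂.symm.trans hr')
    linarith
  obtain ⟨j, ⟨s, hs, hj⟩, hj'⟩ :=
    Fin.exists_and_not_add_one (Q := fun j => ∃ r : ℝ, 0 < r ∧ v j - x = r • w) hj₁ hj₂'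
  exact hx_edge j <| mem_segment_of_det2_nonneg hw (hccw j j₂) (hsupp' _) hj hs hj₂ ht hj'

theorem crossing_edge_closer_general
    (n : ℕ) [NeZero n] (v : Fin n → Pt)
    (hccw : ∀ i j : Fin n, 0 ≤ det2 (v (i + 1) - v i) (v j - v i))
    (i : Fin n) (p q : Pt)
    (hp : p ∉ convexHull ℝ (Set.range v))
    (hq : q ∈ segment ℝ (v i) (v (i + 1)))
    (hqmin : ∀ x ∈ segment ℝ (v i) (v (i + 1)), dist p q ≤ dist p x)
    (hmeet : (segment ℝ p q ∩ interior (convexHull ℝ (Set.range v))).Nonempty) :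
    ∃ j : Fin n, j ≠ i ∧
      (segment ℝ p q ∩ segment ℝ (v j) (v (j + 1))).Nonempty ∧
      infDist p (segment ℝ (v j) (v (j + 1))) <
        infDist p (segment ℝ (v i) (v (i + 1))) := by
  set P := convexHull ℝ (Set.range v)
  obtain ⟨m, hm, hmP⟩ := hmeet
  obtain ⟨x, hxm, hx⟩ := (convex_segment m p).isPreconnected.inter_frontier_nonempty
    ⟨m, left_mem_segment ℝ m p, interior_subset hmP⟩ ⟨p, right_mem_segment ℝ m p, hp⟩
  obtain ⟨j, hj⟩ := exists_mem_edge_of_mem_frontier hccw ⟨m, hmP⟩ hx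
  have hxP : x ∈ P := ((Set.finite_range v).isClosed_convexHull (𝕜 := ℝ)).frontier_subset hx
  have hmp : m ≠ p := fun h => hp (h ▸ interior_subset hmP)
  have hx_open : x ∈ openSegment ℝ m p := mem_openSegment_of_ne_left_right
    (fun h => hx.2 (h ▸ hmP)) (fun h => hp (h ▸ hxP)) hxm
  have hdist : dist p x < dist p q := calc
    dist p x = dist x p := dist_comm p x
    _ < dist m p := mem_ball.1 <| openSegment_subset_ball_of_ne (mem_closedBall.2 le_rfl)
        (mem_closedBall_self dist_nonneg) hmp hx_open
    _ ≤ dist p q := mem_closedBall.1 <| segment_subset_closedBall_left p q hm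
  have hinf : infDist p (segment ℝ (v i) (v (i + 1))) = dist p q :=
    le_antisymm (infDist_le_dist_of_mem hq) ((le_infDist ⟨q, hq⟩).2 hqmin)
  have hlt : infDist p (segment ℝ (v j) (v (j + 1))) <
      infDist p (segment ℝ (v i) (v (i + 1))) :=
    hinf ▸ (infDist_le_dist_of_mem hj).trans_lt hdist
  have hxpq : x ∈ segment ℝ p q :=
    (convex_segment p q).segment_subset hm (left_mem_segment ℝ p q) hxm
  refine ⟨j, ?_, ⟨x, hxpq, hj⟩, hlt⟩
  rintro rfl
  exact lt_irrefl _ hlt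

/-- Let `P` be a convex polygon with vertices `v 0, …, v (n-1)` in
counter-clockwise order, `e` the edge from `v i` to `v (i+1)`, and `p ∉ P` a
point strictly to the left of (the supporting line of) `e`.  If the segment
from `p` to its closest point `q` on `e` meets the interior of `P`, then this
segment crosses another edge `e'` of `P` whose Euclidean distance to `p` is
strictly smaller than that of `e`. -/
theorem crossing_edge_closer
    (n : ℕ) [NeZero n] (hn : 3 ≤ n) (v : Fin n → Pt)
    (hccw : ∀ i j : Fin n, 0 ≤ det2 (v (i + 1) - v i) (v j - v i))
    (hint : (interior (convexHull ℝ (Set.range v))).Nonempty)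
    (i : Fin n) (p q : Pt)
    (hp : p ∉ convexHull ℝ (Set.range v))
    (hleft : 0 < det2 (v (i + 1) - v i) (p - v i))
    (hq : q ∈ segment ℝ (v i) (v (i + 1)))
    (hqmin : ∀ x ∈ segment ℝ (v i) (v (i + 1)), dist p q ≤ dist p x)
    (hmeet : (segment ℝ p q ∩ interior (convexHull ℝ (Set.range v))).Nonempty) :
    ∃ j : Fin n, j ≠ i ∧
      (segment ℝ p q ∩ segment ℝ (v j) (v (j + 1))).Nonempty ∧
      infDist p (segment ℝ (v j) (v (j + 1))) <
        infDist p (segment ℝ (v i) (v (i + 1))) :=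
  crossing_edge_closer_general n v hccw i p q hp hq hqmin hmeet

end
end

section
/- If the angle at the common vertex v between consecutive edges e' = [u,v] and e'' = [v,w] is obtuse, then the ray from v perpendicular to the baseline segment [u,w] (directed to the exterior side) lies strictly inside the exterior corner-cone at v, i.e., this ray makes an obtuse angle (> π/2) with both e' and e''. -/
open EuclideanGeometry RealInnerProductSpace

/-- If the angle at the common vertex `v` of consecutive edges `[u,v]` and
`[v,w]` is obtuse, then any ray from `v` perpendicular to the baseline `[u,w]`
and directed to the exterior side (away from the baseline) lies strictly
inside the exterior corner-cone at `v`: it makes an obtuse angle with both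
edges, i.e. `⟪d, u − v⟫ < 0` and `⟪d, w − v⟫ < 0`. -/
theorem approx_bisector_in_exterior_cone
    (u v w d : EuclideanSpace ℝ (Fin 2))
    (huv : u ≠ v) (hvw : v ≠ w)
    (hobtuse : Real.pi / 2 < ∠ u v w)
    (hd : d ≠ 0)
    (hperp : ⟪d, w - u⟫ = 0)
    (hext : ⟪d, (u + w) - (2 : ℝ) • v⟫ < 0) :
    ⟪d, u - v⟫ < 0 ∧ ⟪d, w - v⟫ < 0 := by
  have h1 : ⟪d, w - u⟫ = ⟪d, w⟫ - ⟪d, u⟫ := inner_sub_right d w u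
  have h2 : ⟪d, (u + w) - (2:ℝ) • v⟫ = ⟪d, u - v⟫ + ⟪d, w - v⟫ := by
    simp [inner_sub_right, inner_add_right, inner_smul_right]; ring
  have h3 : ⟪d, u - v⟫ = ⟪d, w - v⟫ := by
    have := hperp; rw [h1] at this
    rw [inner_sub_right, inner_sub_right]; linarith
  rw [h2, h3] at hext
  constructor <;> linarith
end

section
/- Points p strictly inside the corner-cone at vertex v of a convex polygon (closest boundary point is v) are unambiguously partitioned by the celestial distance: Dist(e, p) < Dist(e', p) iff the wide angle between e and [v,p] is smaller than the wide angle between e' and [v,p], and equality of celestial distances occurs exactly when p lies on the angular bisector ray of the exterior cone at v. -/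
open Metric RealInnerProductSpace

noncomputable section

lemma isCompact_seg (a b : Pt) : IsCompact (segment ℝ a b) := by
  rw [segment_eq_image']
  exact isCompact_Icc.image (by continuity)

/-- A closest point of the segment `[a,b]` to `p`. -/
def closestPt (a b p : Pt) : Pt :=
  Classical.choose ((isCompact_seg a b).exists_infDist_eq_dist
    ⟨a, left_mem_segment ℝ a b⟩ p)

/-- The wide angle (≥ π/2) between segment `[a,b]` and the segment from `p`
to its closest point on `[a,b]`, or `0` if `p` lies on the segment. -/
def wideAngle (a b p : Pt) : ℝ :=
  if infDist p (segment ℝ a b) = 0 then 0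
  else max (InnerProductGeometry.angle (p - closestPt a b p) (a - closestPt a b p))
           (InnerProductGeometry.angle (p - closestPt a b p) (b - closestPt a b p))

/-- Celestial distance of edge `[a,b]` to `p`. -/
def celestialDist (a b p : Pt) : ℝ × ℝ :=
  (infDist p (segment ℝ a b), wideAngle a b p)

/-- Lexicographic comparison of celestial distances. -/
def cLt (x y : ℝ × ℝ) : Prop := x.1 < y.1 ∨ (x.1 = y.1 ∧ x.2 < y.2)

end

lemma closestPt_spec (a b p : Pt) :
    closestPt a b p ∈ segment ℝ a b ∧ infDist p (segment ℝ a b) = dist p (closestPt a b p) :=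
  Classical.choose_spec ((isCompact_seg a b).exists_infDist_eq_dist
    ⟨a, left_mem_segment ℝ a b⟩ p)

lemma inner_expand (x y : Pt) (s : ℝ) :
    ⟪x - s • y, x - s • y⟫ = ⟪x, x⟫ - 2 * s * ⟪x, y⟫ + s ^ 2 * ⟪y, y⟫ := by
  simp only [inner_sub_left, inner_sub_right, real_inner_smul_left, real_inner_smul_right,
    real_inner_comm x y]
  ring

lemma dist_le_of_cone (a v p q : Pt) (h : ⟪p - v, a - v⟫ < 0)
    (hq : q ∈ segment ℝ v a) : dist p v ≤ dist p q ∧ (q ≠ v → dist p v < dist p q) := by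
  rw [segment_eq_image'] at hq
  obtain ⟨t, ⟨ht0, _⟩, rfl⟩ := hq
  have key : ∀ s : ℝ, 0 ≤ s → dist p v ^ 2 + 2 * s * (-⟪p - v, a - v⟫)
      ≤ dist p (v + s • (a - v)) ^ 2 := by
    intro s hs
    rw [dist_eq_norm, dist_eq_norm]
    have he : p - (v + s • (a - v)) = (p - v) - s • (a - v) := by abel
    rw [he, ← real_inner_self_eq_norm_sq, ← real_inner_self_eq_norm_sq,
      inner_expand (p - v) (a - v) s]
    have h2 : (0:ℝ) ≤ ⟪a - v, a - v⟫ := real_inner_self_nonneg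
    nlinarith
  constructor
  · have := key t ht0
    have h4 : 0 ≤ 2 * t * (-⟪p - v, a - v⟫) := by
      have : 0 < -⟪p - v, a - v⟫ := by linarith
      positivity
    nlinarith [dist_nonneg (x := p) (y := v), dist_nonneg (x := p) (y := v + t • (a - v))]
  · intro hne
    have htpos : 0 < t := by
      rcases ht0.lt_or_eq with h' | h'
      · exact h'
      · simp [← h'] at hne
    have := key t ht0
    have h4 : 0 < 2 * t * (-⟪p - v, a - v⟫) := by
      have : 0 < -⟪p - v, a - v⟫ := by linarith
      positivity
    have hsq : dist p v ^ 2 < dist p (v + t • (a - v)) ^ 2 := by linarith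
    exact lt_of_pow_lt_pow_left₀ 2 dist_nonneg hsq

lemma infDist_eq_of_cone (a v p : Pt) (h : ⟪p - v, a - v⟫ < 0) :
    infDist p (segment ℝ v a) = dist p v := by
  refine le_antisymm (infDist_le_dist_of_mem (left_mem_segment ℝ v a)) ?_
  by_contra hlt
  push_neg at hlt
  obtain ⟨q, hq, hd⟩ := (infDist_lt_iff ⟨v, left_mem_segment ℝ v a⟩).mp hlt
  exact absurd hd (not_lt.mpr (dist_le_of_cone a v p q h hq).1)

lemma closestPt_eq_of_cone (a b far v p : Pt) (hseg : segment ℝ a b = segment ℝ v far)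
    (h : ⟪p - v, far - v⟫ < 0) : closestPt a b p = v := by
  obtain ⟨hmem, heq⟩ := closestPt_spec a b p
  rw [hseg] at hmem heq
  by_contra hne
  have := (dist_le_of_cone far v p _ h hmem).2 hne
  rw [← heq, infDist_eq_of_cone far v p h] at this
  exact lt_irrefl _ this

lemma angle_ge_pi_div_two (x y : Pt) (h : ⟪x, y⟫ < 0) :
    Real.pi / 2 ≤ InnerProductGeometry.angle x y := by
  by_contra hlt
  push_neg at hlt
  have hc : 0 ≤ Real.cos (InnerProductGeometry.angle x y) :=
    Real.cos_nonneg_of_mem_Icc ⟨by linarith [InnerProductGeometry.angle_nonneg x y,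
      Real.pi_pos], hlt.le⟩
  have hm := InnerProductGeometry.cos_angle_mul_norm_mul_norm x y
  have : (0:ℝ) ≤ ⟪x, y⟫ :=
    hm ▸ mul_nonneg hc (mul_nonneg (norm_nonneg x) (norm_nonneg y))
  linarith

/-- For a point `p` strictly inside the corner-cone at the common vertex `v`
of the edges `e = [u,v]` and `e' = [v,w]` of a convex polygon, the celestial
distance unambiguously compares the two edges: `Dist(e,p) < Dist(e',p)` iff
the wide angle of `e` towards `p` is smaller than that of `e'`, and the two
celestial distances are equal exactly when `p` lies on the angular bisector
ray of the exterior cone at `v` (equal angles of `p − v` with `−(u − v)` and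
`−(w − v)`). -/
theorem corner_cone_partition
    (u v w p : Pt) (huv : u ≠ v) (hvw : v ≠ w) (hpv : p ≠ v)
    (hcone : ⟪p - v, u - v⟫ < 0 ∧ ⟪p - v, w - v⟫ < 0) :
    (cLt (celestialDist u v p) (celestialDist v w p) ↔
      wideAngle u v p < wideAngle v w p) ∧
    (celestialDist u v p = celestialDist v w p ↔
      InnerProductGeometry.angle (p - v) (-(u - v)) =
        InnerProductGeometry.angle (p - v) (-(w - v))) := by
  obtain ⟨h1, h2⟩ := hcone
  have hd1 : infDist p (segment ℝ u v) = dist p v := by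
    rw [segment_symm]; exact infDist_eq_of_cone u v p h1
  have hd2 : infDist p (segment ℝ v w) = dist p v := infDist_eq_of_cone w v p h2
  have hdne : dist p v ≠ 0 := by simp [dist_eq_zero, hpv]
  have hc1 : closestPt u v p = v := closestPt_eq_of_cone u v u v p (segment_symm ℝ u v) h1
  have hc2 : closestPt v w p = v := closestPt_eq_of_cone v w w v p rfl h2
  have hw1 : wideAngle u v p = InnerProductGeometry.angle (p - v) (u - v) := by
    rw [wideAngle, hd1, if_neg hdne, hc1, sub_self, InnerProductGeometry.angle_zero_right]
    exact max_eq_left (angle_ge_pi_div_two _ _ h1)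
  have hw2 : wideAngle v w p = InnerProductGeometry.angle (p - v) (w - v) := by
    rw [wideAngle, hd2, if_neg hdne, hc2, sub_self, InnerProductGeometry.angle_zero_right]
    exact max_eq_right (angle_ge_pi_div_two _ _ h2)
  constructor
  · constructor
    · rintro (h | ⟨_, h⟩)
      · simp only [celestialDist, hd1, hd2] at h; exact absurd h (lt_irrefl _)
      · exact h
    · intro h; exact Or.inr ⟨by simp [celestialDist, hd1, hd2], h⟩
  · rw [InnerProductGeometry.angle_neg_right, InnerProductGeometry.angle_neg_right]
    constructor
    · intro h
      have := congrArg Prod.snd h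
      simp only [celestialDist] at this
      rw [hw1, hw2] at this
      linarith
    · intro h
      have hww : wideAngle u v p = wideAngle v w p := by rw [hw1, hw2]; linarith
      simp [celestialDist, hd1, hd2, hww]
end
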